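/- arXiv:1707.05079 — 7 statements merged into one kernel-verified Lean document; each statement's English description precedes it below -/
import Mathlib

section
/- Let R be a finite ring and r ∈ R a nonzero element with 2r = 0. Let Γ_R^r be the graph with vertex set R and distinct vertices x,y adjacent iff [x,y] ≠ r and [y,x] ≠ r. Then 2|E(Γ_R^r)| = |R|^2 - |R| - |R|^2 · Pr_r(R), i.e., Pr_r(R) = 1 - 1/|R| - 2|E(Γ_R^r)|/|R|^2. -/
/-- The `r`-noncommuting graph of a ring `R`: distinct `x`, `y` are adjacent iff
`[x,y] ≠ r` and `[y,x] ≠ r`. -/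
def rNoncommGraph (R : Type*) [Ring R] (r : R) : SimpleGraph R where
  Adj x y := x ≠ y ∧ x * y - y * x ≠ r ∧ y * x - x * y ≠ r
  symm := by
    constructor
    rintro x y ⟨h1, h2, h3⟩
    exact ⟨h1.symm, h3, h2⟩
  loopless := by constructor; rintro x ⟨h1, _⟩; exact h1 rfl

/-!
Every ordered pair `(x, y)` of `R × R` falls into exactly one of three classes: the diagonal
(`x = y`, where `[x,y] = 0 ≠ r`), the pairs with `[x,y] = r`, and the ordered pairs of adjacent
vertices. Since `2r = 0`, `[y,x] = -[x,y]` equals `r` iff `[x,y]` does, so the third class is the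
complement of the other two; it has twice as many elements as the edge set.
-/

open Set

theorem Set.ncard_diagonal (α : Type*) : (diagonal α).ncard = Nat.card α := by
  rw [← range_diag, ncard_range_of_injective Function.diag_injective]

theorem SimpleGraph.ncard_setOf_adj_eq_two_mul_ncard_edgeSet {V : Type*} [Fintype V]
    (G : SimpleGraph V) : {p : V × V | G.Adj p.1 p.2}.ncard = 2 * G.edgeSet.ncard := by
  classical
  let dartEquiv : G.Dart ≃ {p : V × V | G.Adj p.1 p.2} :=
    { toFun := fun d => ⟨d.toProd, d.adj⟩
      invFun := fun p => ⟨p.1, p.2⟩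
      left_inv := fun _ => rfl
      right_inv := fun _ => rfl }
  rw [← Nat.card_coe_set_eq, ← Nat.card_congr dartEquiv, Nat.card_eq_fintype_card,
    dart_card_eq_twice_card_edges, ← Nat.card_coe_set_eq, Nat.card_eq_fintype_card,
    card_edgeSet]

section rNoncommGraph

variable {R : Type*} [Ring R] {r : R}

theorem rNoncommGraph_adj_iff (h2r : 2 • r = 0) {x y : R} :
    (rNoncommGraph R r).Adj x y ↔ x ≠ y ∧ x * y - y * x ≠ r := by
  have hneg : -r = r := neg_eq_of_add_eq_zero_left (by rwa [two_smul] at h2r)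
  have hswap : y * x - x * y = r ↔ x * y - y * x = r := by
    rw [← neg_sub, neg_eq_iff_eq_neg, hneg]
  change x ≠ y ∧ x * y - y * x ≠ r ∧ y * x - x * y ≠ r ↔ _
  simp only [ne_eq, hswap, and_self]

theorem compl_setOf_commutator_eq (hr : r ≠ 0) (h2r : 2 • r = 0) :
    {p : R × R | p.1 * p.2 - p.2 * p.1 = r}ᶜ =
      {p : R × R | (rNoncommGraph R r).Adj p.1 p.2} ∪ diagonal R := by
  ext ⟨x, y⟩
  simp only [mem_compl_iff, mem_ofPred_eq, mem_union, mem_diagonal_iff, rNoncommGraph_adj_iff h2r]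
  by_cases hxy : x = y
  · simp [hxy, Ne.symm hr]
  · simp [hxy]

end rNoncommGraph

theorem stmt_10 (R : Type*) [Ring R] [Fintype R] (r : R) (hr : r ≠ 0) (h2r : 2 • r = 0) :
    2 * Nat.card (rNoncommGraph R r).edgeSet + Fintype.card R +
        Nat.card {p : R × R | p.1 * p.2 - p.2 * p.1 = r} =
      Fintype.card R ^ 2 := by
  have hdisj : Disjoint {p : R × R | (rNoncommGraph R r).Adj p.1 p.2} (diagonal R) :=
    disjoint_left.2 fun _ hadj hdiag => (rNoncommGraph R r).ne_of_adj hadj hdiag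
  rw [Nat.card_coe_set_eq, Nat.card_coe_set_eq, ← Nat.card_eq_fintype_card, sq, ← Nat.card_prod,
    ← ncard_diagonal, ← SimpleGraph.ncard_setOf_adj_eq_two_mul_ncard_edgeSet,
    ← ncard_union_eq hdisj, ← compl_setOf_commutator_eq hr h2r, ncard_compl_add_ncard]
end

section
/- Let R be a finite ring and r ∈ R a nonzero element with 2r ≠ 0. Let Γ_R^r be the graph with vertex set R and distinct vertices x,y adjacent iff [x,y] ≠ r and [y,x] ≠ r. Then 2|E(Γ_R^r)| = |R|^2 - |R| - 2|R|^2 · Pr_r(R), i.e., Pr_r(R) = (1/2)(1 - 1/|R| - 2|E(Γ_R^r)|/|R|^2). -/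
/-!
Ordered pairs `(x, y)` of `R × R` split into the diagonal, the ordered edges of `Γ_R^r`, and the
ordered edges of its complement. Since `r ≠ 0`, no diagonal pair has commutator `r`, and since
`2r ≠ 0`, a pair `{x, y}` cannot have both `[x, y] = r` and `[y, x] = r`; so each edge of the
complement carries exactly one orientation with commutator `r`, and the complement has as many
edges as there are pairs with `[x, y] = r`.
-/

open Finset

namespace SimpleGraph

theorem two_mul_card_edgeSet_add_card_add_two_mul_card_edgeSet_compl {V : Type*} [Fintype V]
    (G : SimpleGraph V) :
    2 * Nat.card G.edgeSet + Fintype.card V + 2 * Nat.card Gᶜ.edgeSet = Fintype.card V ^ 2 := by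
  classical
  have two_mul_card (H : SimpleGraph V) :
      2 * Nat.card H.edgeSet = #{p : V × V | H.Adj p.1 p.2} := by
    rw [Nat.card_eq_card_toFinset, ← edgeFinset, two_mul_card_edgeFinset]
  have h_adj : #{p ∈ (univ : Finset V).offDiag | G.Adj p.1 p.2} = 2 * Nat.card G.edgeSet := by
    rw [two_mul_card]; congr 1; ext ⟨x, y⟩; simpa using fun h : G.Adj x y => h.ne
  have h_compl : #{p ∈ (univ : Finset V).offDiag | ¬G.Adj p.1 p.2} = 2 * Nat.card Gᶜ.edgeSet := by
    rw [two_mul_card]; congr 1; ext ⟨x, y⟩; simp [compl_adj]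
  have h_offDiag := card_filter_add_card_filter_not (s := (univ : Finset V).offDiag)
    fun p => G.Adj p.1 p.2
  rw [h_adj, h_compl, offDiag_card, card_univ] at h_offDiag
  have h_card_le := Nat.le_mul_self (Fintype.card V)
  rw [sq]; omega

end SimpleGraph

section Commutator

variable {R : Type*} [Ring R] {r : R}

theorem ne_of_commutator_eq (hr : r ≠ 0) {x y : R} (h : x * y - y * x = r) : x ≠ y := by
  rintro rfl
  exact hr (by rw [← h, sub_self])

theorem commutator_ne_of_eq_swap (h2r : 2 • r ≠ 0) {x y : R} (h : x * y - y * x = r) :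
    y * x - x * y ≠ r := by
  intro h'
  apply h2r
  rw [two_smul]
  nth_rw 1 [← h]
  rw [← h', sub_add_sub_cancel, sub_self]

theorem compl_rNoncommGraph_adj (hr : r ≠ 0) {x y : R} :
    (rNoncommGraph R r)ᶜ.Adj x y ↔ x * y - y * x = r ∨ y * x - x * y = r := by
  rw [SimpleGraph.compl_adj]
  constructor
  · rintro ⟨hne, hnadj⟩
    by_contra! h
    exact hnadj ⟨hne, h⟩
  · rintro (h | h)
    · exact ⟨ne_of_commutator_eq hr h, fun hadj => hadj.2.1 h⟩
    · exact ⟨(ne_of_commutator_eq hr h).symm, fun hadj => hadj.2.2 h⟩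

theorem card_edgeSet_compl_rNoncommGraph (hr : r ≠ 0) (h2r : 2 • r ≠ 0) :
    Nat.card (rNoncommGraph R r)ᶜ.edgeSet = Nat.card {p : R × R | p.1 * p.2 - p.2 * p.1 = r} := by
  have h_image : (rNoncommGraph R r)ᶜ.edgeSet =
      (fun p : R × R => s(p.1, p.2)) '' {p | p.1 * p.2 - p.2 * p.1 = r} := by
    ext e
    induction e using Sym2.ind with | h x y => ?_
    rw [SimpleGraph.mem_edgeSet, compl_rNoncommGraph_adj hr]
    constructor
    · rintro (h | h)
      · exact ⟨(x, y), h, rfl⟩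
      · exact ⟨(y, x), h, Sym2.eq_swap⟩
    · rintro ⟨⟨a, b⟩, hab, he⟩
      rcases Sym2.eq_iff.mp he with ⟨rfl, rfl⟩ | ⟨rfl, rfl⟩
      · exact .inl hab
      · exact .inr hab
  have h_injOn : Set.InjOn (fun p : R × R => s(p.1, p.2)) {p | p.1 * p.2 - p.2 * p.1 = r} := by
    rintro ⟨a, b⟩ hab ⟨c, d⟩ hcd he
    rcases Sym2.eq_iff.mp he with ⟨rfl, rfl⟩ | ⟨rfl, rfl⟩
    · rfl
    · exact absurd hab (commutator_ne_of_eq_swap h2r hcd)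
  rw [h_image, Nat.card_image_of_injOn h_injOn]

end Commutator

theorem stmt_11 (R : Type*) [Ring R] [Fintype R] (r : R) (hr : r ≠ 0) (h2r : 2 • r ≠ 0) :
    2 * Nat.card (rNoncommGraph R r).edgeSet + Fintype.card R +
        2 * Nat.card {p : R × R | p.1 * p.2 - p.2 * p.1 = r} =
      Fintype.card R ^ 2 := by
  rw [← card_edgeSet_compl_rNoncommGraph hr h2r]
  exact (rNoncommGraph R r).two_mul_card_edgeSet_add_card_add_two_mul_card_edgeSet_compl
end

section
/- Let R be a finite ring and r ∈ R with r ≠ 0. If there exist s, k ∈ R with [s,k] = r, then Pr_r(R) ≥ 3 |Z(R)|^2 / |R|^2, i.e., Pr_r(R) ≥ 3/[R : Z(R)]^2. -/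
lemma comm_shift {R : Type*} [Ring R] (a b z w : R)
    (hz : ∀ x, z * x = x * z) (hw : ∀ x, w * x = x * w) :
    (a + z) * (b + w) - (b + w) * (a + z) = a * b - b * a := by
  rw [add_mul, add_mul, mul_add, mul_add, mul_add, mul_add, hz b, hz w, hw a]
  abel

theorem stmt_12 (R : Type*) [Ring R] [Fintype R] (r : R) (hr : r ≠ 0)
    (h : ∃ s k : R, s * k - k * s = r) :
    (Nat.card {p : R × R | p.1 * p.2 - p.2 * p.1 = r} : ℚ) / (Fintype.card R : ℚ) ^ 2 ≥
      3 * (Nat.card (Subring.center R) : ℚ) ^ 2 / (Fintype.card R : ℚ) ^ 2 := by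
  obtain ⟨s, k, hsk⟩ := h
  set Z := Subring.center R
  have hcen : ∀ z : Z, ∀ x : R, (z : R) * x = x * (z : R) := by
    intro z x
    exact (Subring.mem_center_iff.mp z.2 x).symm
  have hsZ : s ∉ Z := by
    intro hs
    apply hr
    rw [← hsk, Subring.mem_center_iff.mp hs k, sub_self]
  have hkZ : k ∉ Z := by
    intro hk
    apply hr
    rw [← hsk, ← Subring.mem_center_iff.mp hk s, sub_self]
  let f : Fin 3 × (Z × Z) → R × R := fun x =>
    match x.1 with
    | 0 => (s + x.2.1, k + x.2.2)
    | 1 => (s + x.2.1, s + k + x.2.2)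
    | 2 => (s + k + x.2.1, k + x.2.2)
  have hmem : ∀ x, f x ∈ {p : R × R | p.1 * p.2 - p.2 * p.1 = r} := by
    rintro ⟨i, z1, z2⟩
    fin_cases i <;>
      simp only [f, Set.mem_setOf_eq] <;>
      rw [comm_shift _ _ _ _ (hcen z1) (hcen z2)] <;>
      rw [← hsk] <;> noncomm_ring
  let g : Fin 3 × (Z × Z) → {p : R × R | p.1 * p.2 - p.2 * p.1 = r} := fun x => ⟨f x, hmem x⟩
  have hginj : Function.Injective g := by
    rintro ⟨i, z1, z2⟩ ⟨j, w1, w2⟩ hgeq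
    have heq : f (i, z1, z2) = f (j, w1, w2) := congrArg Subtype.val hgeq
    have hs' : ∀ (a b : Z), k + (a : R) = s + k + (b : R) → False := by
      intro a b hab
      apply hsZ
      have hx : s = ((a - b : Z) : R) := by
        push_cast
        rw [eq_sub_iff_add_eq]
        apply add_left_cancel (a := (k : R))
        rw [hab]; abel
      rw [hx]; exact (a - b).2
    have hk' : ∀ (a b : Z), s + (a : R) = s + k + (b : R) → False := by
      intro a b hab
      apply hkZ
      have hx : k = ((a - b : Z) : R) := by
        push_cast
        rw [eq_sub_iff_add_eq]
        apply add_left_cancel (a := (s : R))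
        rw [hab]; abel
      rw [hx]; exact (a - b).2
    fin_cases i <;> fin_cases j <;>
      simp only [f, Prod.mk.injEq] at heq <;>
      obtain ⟨h1, h2⟩ := heq <;>
      first
        | exact absurd h2 (fun hh => hs' _ _ hh)
        | exact absurd h2.symm (fun hh => hs' _ _ hh)
        | exact absurd h1 (fun hh => hk' _ _ hh)
        | exact absurd h1.symm (fun hh => hk' _ _ hh)
        | · have e1 : z1 = w1 := Subtype.ext (add_left_cancel h1)
            have e2 : z2 = w2 := Subtype.ext (add_left_cancel h2)
            simp [e1, e2]
  have hcard : 3 * Nat.card Z ^ 2 ≤ Nat.card {p : R × R | p.1 * p.2 - p.2 * p.1 = r} := by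
    have := Nat.card_le_card_of_injective g hginj
    simpa [Nat.card_prod, sq, mul_assoc] using this
  rw [ge_iff_le]
  gcongr
  exact_mod_cast hcard
end

section
/- Let R be a finite ring and r ∈ R. Then Pr_r(R) ≤ Pr(R), with equality if and only if r = 0. -/
/-- The probability that the commutator of a random pair of elements of `R` equals `r`. -/
noncomputable def commProb' (R : Type*) [Ring R] [Fintype R] (r : R) : ℚ :=
  (Nat.card {p : R × R | p.1 * p.2 - p.2 * p.1 = r} : ℚ) / (Fintype.card R : ℚ) ^ 2

section aux

variable {R : Type*} [Ring R] [Fintype R] (r : R)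

open Classical in
/-- For `x` admitting a solution of `x*y - y*x = r`, a chosen solution. -/
noncomputable def solPick (x : R) : R :=
  if h : ∃ y : R, x * y - y * x = r then h.choose else 0

lemma solPick_spec {x : R} (h : ∃ y : R, x * y - y * x = r) :
    x * solPick r x - solPick r x * x = r := by
  rw [solPick, dif_pos h]; exact h.choose_spec

/-- The shifting injection from the `r`-fiber to the `0`-fiber. -/
noncomputable def shiftMap (p : {p : R × R | p.1 * p.2 - p.2 * p.1 = r}) :
    {p : R × R | p.1 * p.2 - p.2 * p.1 = (0 : R)} :=
  ⟨(p.1.1, p.1.2 - solPick r p.1.1), by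
    have hs := solPick_spec r ⟨p.1.2, p.2⟩
    have hp := p.2
    simp only [Set.mem_setOf_eq] at hp ⊢
    rw [mul_sub, sub_mul]
    have : p.1.1 * p.1.2 - p.1.1 * solPick r p.1.1 -
        (p.1.2 * p.1.1 - solPick r p.1.1 * p.1.1)
        = (p.1.1 * p.1.2 - p.1.2 * p.1.1) -
          (p.1.1 * solPick r p.1.1 - solPick r p.1.1 * p.1.1) := by abel
    rw [this, hp, hs, sub_self]⟩

lemma shiftMap_injective : Function.Injective (shiftMap r) := by
  rintro ⟨⟨x, y⟩, h⟩ ⟨⟨x', y'⟩, h'⟩ he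
  simp only [shiftMap, Subtype.mk_eq_mk, Prod.mk.injEq] at he
  obtain ⟨h1, h2⟩ := he
  subst h1
  have : y = y' := by
    have := sub_left_injective h2
    exact this
  simp [this]

lemma card_le : Nat.card {p : R × R | p.1 * p.2 - p.2 * p.1 = r}
    ≤ Nat.card {p : R × R | p.1 * p.2 - p.2 * p.1 = (0 : R)} :=
  Nat.card_le_card_of_injective _ (shiftMap_injective r)

lemma card_lt (hr : r ≠ 0) : Nat.card {p : R × R | p.1 * p.2 - p.2 * p.1 = r}
    < Nat.card {p : R × R | p.1 * p.2 - p.2 * p.1 = (0 : R)} := by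
  classical
  haveI : Fintype {p : R × R | p.1 * p.2 - p.2 * p.1 = r} := Fintype.ofFinite _
  haveI : Fintype {p : R × R | p.1 * p.2 - p.2 * p.1 = (0 : R)} := Fintype.ofFinite _
  rw [Nat.card_eq_fintype_card, Nat.card_eq_fintype_card]
  refine Fintype.card_lt_of_injective_of_notMem (shiftMap r) (shiftMap_injective r)
    (b := ⟨((0 : R), (0 : R)), by simp⟩) ?_
  rintro ⟨⟨⟨x, y⟩, h⟩, he⟩
  simp only [shiftMap, Subtype.mk_eq_mk, Prod.mk.injEq] at he
  obtain ⟨h1, -⟩ := he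
  subst h1
  simp only [Set.mem_setOf_eq, zero_mul, mul_zero, sub_zero, sub_self] at h
  exact hr h.symm

end aux

theorem stmt_14 (R : Type*) [Ring R] [Fintype R] (r : R) :
    commProb' R r ≤ commProb' R 0 ∧ (commProb' R r = commProb' R 0 ↔ r = 0) := by
  have hD : (0 : ℚ) < (Fintype.card R : ℚ) ^ 2 := by
    positivity
  have hle : commProb' R r ≤ commProb' R 0 := by
    unfold commProb'
    gcongr
    exact_mod_cast card_le r
  refine ⟨hle, ⟨fun he => ?_, fun h => by subst h; rfl⟩⟩
  by_contra hr
  have hlt : commProb' R r < commProb' R 0 := by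
    unfold commProb'
    rw [div_lt_div_iff_of_pos_right hD]
    exact_mod_cast card_lt r hr
  exact absurd he (ne_of_lt hlt)
end

section
/- Let R be a finite noncommutative ring, p the smallest prime dividing |R|, and r ∈ R with r ≠ 0. Then Pr_r(R) ≤ (|R| - |Z(R)|)/(p|R|), and in particular Pr_r(R) < 1/p. -/
theorem stmt_15 (R : Type*) [Ring R] [Fintype R] (hnc : ∃ a b : R, a * b ≠ b * a)
    (r : R) (hr : r ≠ 0) :
    (Nat.card {p : R × R | p.1 * p.2 - p.2 * p.1 = r} : ℚ) / (Fintype.card R : ℚ) ^ 2 ≤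
        ((Fintype.card R : ℚ) - (Nat.card (Subring.center R) : ℚ)) /
          (((Fintype.card R).minFac : ℚ) * (Fintype.card R : ℚ)) ∧
      (Nat.card {p : R × R | p.1 * p.2 - p.2 * p.1 = r} : ℚ) / (Fintype.card R : ℚ) ^ 2 <
        1 / ((Fintype.card R).minFac : ℚ) := by
  classical
  obtain ⟨a, b, hab⟩ := hnc
  have hnontriv : (1 : ℕ) < Fintype.card R := by
    rcases Nat.lt_or_ge 1 (Fintype.card R) with h | h
    · exact h
    · exfalso
      have : Subsingleton R := Fintype.card_le_one_iff_subsingleton.mp h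
      exact hab (Subsingleton.elim _ _)
  set N := Fintype.card R with hNdef
  set p := N.minFac with hpdef
  have hp : p.Prime := Nat.minFac_prime (by omega)
  have hp2 : 2 ≤ p := hp.two_le
  -- center cardinality facts
  have hZle : Nat.card (Subring.center R) ≤ N := by
    rw [Nat.card_eq_fintype_card]
    exact Fintype.card_subtype_le _
  have hZpos : 0 < Nat.card (Subring.center R) := Nat.card_pos
  -- per-x fiber bound
  have fiber_bound : ∀ x : R, x ∉ Subring.center R →
      p * Fintype.card {y : R // x * y - y * x = r} ≤ N := by
    intro x hx
    set f : R →+ R := AddMonoidHom.mulLeft x - AddMonoidHom.mulRight x with hf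
    have hfapply : ∀ y, f y = x * y - y * x := fun y => rfl
    set K := f.ker with hK
    have h1 : Fintype.card {y : R // x * y - y * x = r} ≤ Nat.card K := by
      rcases isEmpty_or_nonempty {y : R // x * y - y * x = r} with he | hne
      · simp [Fintype.card_eq_zero]
      · obtain ⟨⟨y0, hy0⟩⟩ := hne
        rw [Nat.card_eq_fintype_card]
        apply Fintype.card_le_of_injective (fun z => (⟨z.1 - y0, by
          have : f (z.1 - y0) = 0 := by
            rw [map_sub, hfapply, hfapply, z.2, hy0, sub_self]
          exact AddMonoidHom.mem_ker.mpr this⟩ : K))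
        intro z w hzw
        have h2 : z.1 - y0 = w.1 - y0 := congrArg Subtype.val hzw
        exact Subtype.ext (by
          have := sub_left_injective h2
          exact this)
    have hKdvd : Nat.card K ∣ N := by
      have := AddSubgroup.card_addSubgroup_dvd_card K
      rwa [Nat.card_eq_fintype_card (α := R)] at this
    have hKne : K ≠ ⊤ := by
      intro h
      apply hx
      rw [Subring.mem_center_iff]
      intro g
      have hg : g ∈ K := h ▸ AddSubgroup.mem_top g
      have hg0 : x * g - g * x = 0 := AddMonoidHom.mem_ker.mp hg
      have : x * g = g * x := by
        have := sub_eq_zero.mp hg0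
        exact this
      exact this.symm
    have hKpos : 0 < Nat.card K := Nat.card_pos
    have hKlt : Nat.card K < N := by
      rcases lt_or_eq_of_le (Nat.le_of_dvd (by omega) hKdvd) with h | h
      · exact h
      · exfalso
        apply hKne
        apply AddSubgroup.eq_top_of_card_eq
        rw [h, Nat.card_eq_fintype_card]
    obtain ⟨k, hk⟩ := hKdvd
    have hk0 : k ≠ 0 := by
      rintro rfl
      rw [Nat.mul_zero] at hk
      omega
    have hk1 : k ≠ 1 := by
      rintro rfl
      rw [Nat.mul_one] at hk
      omega
    have hpk : p ≤ k := Nat.minFac_le_of_dvd (by omega) ⟨Nat.card K, by rw [hk]; ring⟩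
    calc p * Fintype.card {y : R // x * y - y * x = r}
        ≤ p * Nat.card K := Nat.mul_le_mul_left _ h1
      _ ≤ k * Nat.card K := Nat.mul_le_mul_right _ hpk
      _ = N := by rw [hk]; ring
  -- fibers over central x are empty
  have fiber_zero : ∀ x : R, x ∈ Subring.center R →
      Fintype.card {y : R // x * y - y * x = r} = 0 := by
    intro x hx
    rw [Fintype.card_eq_zero_iff]
    constructor
    rintro ⟨y, hy⟩
    rw [Subring.mem_center_iff] at hx
    exact hr (by rw [← hy, ← hx y, sub_self])
  -- total count
  have hcount : Nat.card {q : R × R | q.1 * q.2 - q.2 * q.1 = r}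
      = ∑ x : R, Fintype.card {y : R // x * y - y * x = r} := by
    rw [Nat.card_eq_fintype_card, ← Fintype.card_sigma]
    exact Fintype.card_congr
      (Equiv.subtypeProdEquivSigmaSubtype fun a b : R => a * b - b * a = r)
  have hfiltercard :
      (Finset.univ.filter (fun x : R => x ∉ Subring.center R)).card
        = N - Nat.card (Subring.center R) := by
    have h1 := Finset.card_filter_add_card_filter_not
      (s := (Finset.univ : Finset R)) (p := fun x : R => x ∈ Subring.center R)
    have h2 : (Finset.univ.filter (fun x : R => x ∈ Subring.center R)).card
        = Nat.card (Subring.center R) := by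
      rw [Nat.card_eq_fintype_card, Fintype.card_subtype]
    rw [Finset.card_univ] at h1
    omega
  have key : p * Nat.card {q : R × R | q.1 * q.2 - q.2 * q.1 = r}
      ≤ (N - Nat.card (Subring.center R)) * N := by
    rw [hcount, Finset.mul_sum]
    calc ∑ x : R, p * Fintype.card {y : R // x * y - y * x = r}
        = ∑ x ∈ Finset.univ.filter (fun x : R => x ∉ Subring.center R),
            p * Fintype.card {y : R // x * y - y * x = r} := by
          symm
          apply Finset.sum_filter_of_ne
          intro x _ hne
          intro hxZ
          exact hne (by rw [fiber_zero x hxZ, Nat.mul_zero])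
      _ ≤ ∑ _x ∈ Finset.univ.filter (fun x : R => x ∉ Subring.center R), N := by
          apply Finset.sum_le_sum
          intro x hx
          exact fiber_bound x (Finset.mem_filter.mp hx).2
      _ = (N - Nat.card (Subring.center R)) * N := by
          rw [Finset.sum_const, smul_eq_mul, hfiltercard]
  -- pass to ℚ
  set S := Nat.card {q : R × R | q.1 * q.2 - q.2 * q.1 = r} with hS
  have keyQ : (p : ℚ) * (S : ℚ) ≤ ((N : ℚ) - (Nat.card (Subring.center R) : ℚ)) * (N : ℚ) := by
    have := key
    have hcast : ((N - Nat.card (Subring.center R) : ℕ) : ℚ)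
        = (N : ℚ) - (Nat.card (Subring.center R) : ℚ) := by
      rw [Nat.cast_sub hZle]
    calc (p : ℚ) * (S : ℚ) = ((p * S : ℕ) : ℚ) := by push_cast; ring
      _ ≤ (((N - Nat.card (Subring.center R)) * N : ℕ) : ℚ) := by exact_mod_cast key
      _ = ((N : ℚ) - (Nat.card (Subring.center R) : ℚ)) * (N : ℚ) := by
          rw [Nat.cast_mul, hcast]
  have hNQ : (0 : ℚ) < (N : ℚ) := by exact_mod_cast Nat.lt_of_lt_of_le Nat.zero_lt_one hnontriv.le
  have hpQ : (0 : ℚ) < (p : ℚ) := by exact_mod_cast Nat.lt_of_lt_of_le Nat.zero_lt_two hp2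
  have hZQ : (1 : ℚ) ≤ (Nat.card (Subring.center R) : ℚ) := by exact_mod_cast hZpos
  have hSQ : (0 : ℚ) ≤ (S : ℚ) := Nat.cast_nonneg _
  constructor
  · rw [div_le_div_iff₀ (by positivity) (by positivity)]
    nlinarith [keyQ, hNQ, hSQ]
  · rw [div_lt_div_iff₀ (by positivity) (by positivity)]
    nlinarith [keyQ, hNQ, hZQ, hpQ]
end

section
/- Let R1 and R2 be finite rings that are Z-isoclinic via (α, β), i.e., α : R1/Z(R1) → R2/Z(R2) and β : [R1,R1] → [R2,R2] are additive group isomorphisms such that β([x1,y1]) = [x2,y2] whenever α(x1 + Z(R1)) = x2 + Z(R2) and α(y1 + Z(R1)) = y2 + Z(R2). Then for every r ∈ [R1,R1], Pr_r(R1) = Pr_{β(r)}(R2). -/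
/-- The additive subgroup `[R,R]` generated by all additive commutators `x*y - y*x`. -/
def commutatorAddSubgroup (R : Type*) [Ring R] : AddSubgroup R :=
  AddSubgroup.closure {z : R | ∃ x y : R, z = x * y - y * x}

/-- A `ℤ`-isoclinism between two rings `R₁` and `R₂`. -/
structure ZIsoclinism (R₁ R₂ : Type*) [Ring R₁] [Ring R₂] where
  α : (R₁ ⧸ (Subring.center R₁).toAddSubgroup) ≃+ (R₂ ⧸ (Subring.center R₂).toAddSubgroup)
  β : commutatorAddSubgroup R₁ ≃+ commutatorAddSubgroup R₂
  compat : ∀ x₁ y₁ : R₁, ∀ x₂ y₂ : R₂,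
    α (QuotientAddGroup.mk x₁) = QuotientAddGroup.mk x₂ →
    α (QuotientAddGroup.mk y₁) = QuotientAddGroup.mk y₂ →
    (β ⟨x₁ * y₁ - y₁ * x₁, AddSubgroup.subset_closure ⟨x₁, y₁, rfl⟩⟩ : R₂) =
      x₂ * y₂ - y₂ * x₂

section Aux

/-- Center as an additive subgroup. -/
abbrev centerAS (R : Type*) [Ring R] : AddSubgroup R := (Subring.center R).toAddSubgroup

variable {R : Type*} [Ring R]

lemma comm_congr {x x' y y' : R}
    (hx : (QuotientAddGroup.mk x : R ⧸ centerAS R) = QuotientAddGroup.mk x')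
    (hy : (QuotientAddGroup.mk y : R ⧸ centerAS R) = QuotientAddGroup.mk y') :
    x * y - y * x = x' * y' - y' * x' := by
  rw [QuotientAddGroup.eq_iff_sub_mem] at hx hy
  have h1 := fun g => (Subring.mem_center_iff.mp hx g)
  have h2 := fun g => (Subring.mem_center_iff.mp hy g)
  have key : x * y - y * x =
      x' * y' - y' * x' + ((x - x') * y' - y' * (x - x'))
        + (x' * (y - y') - (y - y') * x') + ((x - x') * (y - y') - (y - y') * (x - x')) := by
    noncomm_ring
  rw [key, ← h1 y', ← h2 x', ← h1 (y - y')]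
  abel

/-- The commutator map on the quotient, using representatives. -/
noncomputable def cmap (R : Type*) [Ring R]
    (q : (R ⧸ centerAS R) × (R ⧸ centerAS R)) : commutatorAddSubgroup R :=
  ⟨q.1.out * q.2.out - q.2.out * q.1.out,
    AddSubgroup.subset_closure ⟨q.1.out, q.2.out, rfl⟩⟩

lemma cmap_mk (x y : R) :
    cmap R (QuotientAddGroup.mk x, QuotientAddGroup.mk y) =
      ⟨x * y - y * x, AddSubgroup.subset_closure ⟨x, y, rfl⟩⟩ := by
  apply Subtype.ext
  exact comm_congr (QuotientAddGroup.out_eq' _) (QuotientAddGroup.out_eq' _)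

lemma mk_out_add {a : R ⧸ centerAS R} {z : R} (hz : z ∈ centerAS R) :
    (QuotientAddGroup.mk (a.out + z) : R ⧸ centerAS R) = a := by
  have h0 : (QuotientAddGroup.mk z : R ⧸ centerAS R) = 0 :=
    (QuotientAddGroup.eq_zero_iff z).mpr hz
  calc (QuotientAddGroup.mk (a.out + z) : R ⧸ centerAS R)
      = QuotientAddGroup.mk a.out + QuotientAddGroup.mk z := rfl
    _ = a := by rw [h0, add_zero, QuotientAddGroup.out_eq']

lemma sub_out_mem (x : R) :
    x - (QuotientAddGroup.mk x : R ⧸ centerAS R).out ∈ centerAS R := by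
  have h : (QuotientAddGroup.mk (x - (QuotientAddGroup.mk x : R ⧸ centerAS R).out)
      : R ⧸ centerAS R)
      = QuotientAddGroup.mk x - QuotientAddGroup.mk
          ((QuotientAddGroup.mk x : R ⧸ centerAS R).out) := rfl
  exact (QuotientAddGroup.eq_zero_iff _).mp
    (by rw [h, QuotientAddGroup.out_eq', sub_self])

/-- Fibration of commutator pairs over the quotient fibers. -/
noncomputable def fiberEquiv (r : commutatorAddSubgroup R) :
    {p : R × R | p.1 * p.2 - p.2 * p.1 = (r : R)} ≃
      {q : (R ⧸ centerAS R) × (R ⧸ centerAS R) // cmap R q = r} × centerAS R × centerAS R where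
  toFun p :=
    (⟨(QuotientAddGroup.mk p.1.1, QuotientAddGroup.mk p.1.2), by
        rw [cmap_mk]; exact Subtype.ext p.2⟩,
      ⟨p.1.1 - (QuotientAddGroup.mk p.1.1 : R ⧸ centerAS R).out, sub_out_mem _⟩,
      ⟨p.1.2 - (QuotientAddGroup.mk p.1.2 : R ⧸ centerAS R).out, sub_out_mem _⟩)
  invFun q :=
    ⟨(q.1.1.1.out + (q.2.1 : R), q.1.1.2.out + (q.2.2 : R)), by
      show _ * _ - _ * _ = (r : R)
      have h1 : (q.1.1.1.out + (q.2.1 : R)) * (q.1.1.2.out + (q.2.2 : R))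
          - (q.1.1.2.out + (q.2.2 : R)) * (q.1.1.1.out + (q.2.1 : R))
          = q.1.1.1.out * q.1.1.2.out - q.1.1.2.out * q.1.1.1.out :=
        comm_congr
          (by rw [mk_out_add q.2.1.2, QuotientAddGroup.out_eq'])
          (by rw [mk_out_add q.2.2.2, QuotientAddGroup.out_eq'])
      rw [h1]
      exact congrArg Subtype.val q.1.2⟩
  left_inv p := by
    apply Subtype.ext
    apply Prod.ext <;> · show _ + (_ - _) = _; abel
  right_inv q := by
    obtain ⟨⟨⟨a, b⟩, hq⟩, z, w⟩ := q
    refine Prod.ext (Subtype.ext (Prod.ext ?_ ?_)) (Prod.ext ?_ ?_)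
    · exact mk_out_add z.2
    · exact mk_out_add w.2
    · apply Subtype.ext
      show a.out + (z : R) - (QuotientAddGroup.mk (a.out + (z : R)) : R ⧸ centerAS R).out = z
      rw [mk_out_add z.2]; abel
    · apply Subtype.ext
      show b.out + (w : R) - (QuotientAddGroup.mk (b.out + (w : R)) : R ⧸ centerAS R).out = w
      rw [mk_out_add w.2]; abel

variable {R₁ R₂ : Type*} [Ring R₁] [Ring R₂]

lemma cmap_alpha (e : ZIsoclinism R₁ R₂) (a b : R₁ ⧸ centerAS R₁) :
    cmap R₂ (e.α a, e.α b) = e.β (cmap R₁ (a, b)) := by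
  apply Subtype.ext
  have h := e.compat a.out b.out (e.α a).out (e.α b).out
    (by rw [QuotientAddGroup.out_eq', QuotientAddGroup.out_eq'])
    (by rw [QuotientAddGroup.out_eq', QuotientAddGroup.out_eq'])
  exact h.symm

/-- The fibers over `r` and `β r` correspond under `α`. -/
noncomputable def fiberEquiv2 (e : ZIsoclinism R₁ R₂) (r : commutatorAddSubgroup R₁) :
    {q : (R₁ ⧸ centerAS R₁) × (R₁ ⧸ centerAS R₁) // cmap R₁ q = r} ≃
      {q : (R₂ ⧸ centerAS R₂) × (R₂ ⧸ centerAS R₂) // cmap R₂ q = e.β r} :=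
  Equiv.subtypeEquiv (e.α.toEquiv.prodCongr e.α.toEquiv) (fun q => by
    have : cmap R₂ (e.α q.1, e.α q.2) = e.β (cmap R₁ q) := cmap_alpha e q.1 q.2
    constructor
    · intro h
      show cmap R₂ (e.α q.1, e.α q.2) = e.β r
      rw [this, h]
    · intro h
      exact e.β.injective (by rw [← this]; exact h))

end Aux

set_option maxHeartbeats 1000000 in
theorem stmt_18 (R₁ R₂ : Type*) [Ring R₁] [Fintype R₁] [Ring R₂] [Fintype R₂]
    (e : ZIsoclinism R₁ R₂) (r : commutatorAddSubgroup R₁) :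
    commProb' R₁ (r : R₁) = commProb' R₂ (e.β r : R₂) := by
  classical
  have h1 : Nat.card {p : R₁ × R₁ | p.1 * p.2 - p.2 * p.1 = (r : R₁)} =
      Nat.card {q : (R₁ ⧸ centerAS R₁) × (R₁ ⧸ centerAS R₁) // cmap R₁ q = r}
        * (Nat.card (centerAS R₁) * Nat.card (centerAS R₁)) := by
    rw [Nat.card_congr (fiberEquiv r), Nat.card_prod, Nat.card_prod]
  have h2 : Nat.card {p : R₂ × R₂ | p.1 * p.2 - p.2 * p.1 = (e.β r : R₂)} =
      Nat.card {q : (R₂ ⧸ centerAS R₂) × (R₂ ⧸ centerAS R₂) // cmap R₂ q = e.β r}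
        * (Nat.card (centerAS R₂) * Nat.card (centerAS R₂)) := by
    rw [Nat.card_congr (fiberEquiv (e.β r)), Nat.card_prod, Nat.card_prod]
  have h3 : Nat.card {q : (R₁ ⧸ centerAS R₁) × (R₁ ⧸ centerAS R₁) // cmap R₁ q = r} =
      Nat.card {q : (R₂ ⧸ centerAS R₂) × (R₂ ⧸ centerAS R₂) // cmap R₂ q = e.β r} :=
    Nat.card_congr (fiberEquiv2 e r)
  have h4 : (Fintype.card R₁ : ℕ) =
      Nat.card (R₁ ⧸ centerAS R₁) * Nat.card (centerAS R₁) := by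
    rw [← Nat.card_eq_fintype_card]
    exact AddSubgroup.card_eq_card_quotient_mul_card_addSubgroup _
  have h5 : (Fintype.card R₂ : ℕ) =
      Nat.card (R₂ ⧸ centerAS R₂) * Nat.card (centerAS R₂) := by
    rw [← Nat.card_eq_fintype_card]
    exact AddSubgroup.card_eq_card_quotient_mul_card_addSubgroup _
  have h6 : Nat.card (R₁ ⧸ centerAS R₁) = Nat.card (R₂ ⧸ centerAS R₂) :=
    Nat.card_congr e.α.toEquiv
  have hz1 : (0 : ℕ) < Nat.card (centerAS R₁) := Nat.card_pos
  have hz2 : (0 : ℕ) < Nat.card (centerAS R₂) := Nat.card_pos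
  have hq1 : (0 : ℕ) < Nat.card (R₁ ⧸ centerAS R₁) := Nat.card_pos
  unfold commProb'
  rw [h1, h2, h3, h4, h5, ← h6]
  have hz1' : (Nat.card (centerAS R₁) : ℚ) ≠ 0 := by positivity
  have hz2' : (Nat.card (centerAS R₂) : ℚ) ≠ 0 := by positivity
  have hq1' : (Nat.card (R₁ ⧸ centerAS R₁) : ℚ) ≠ 0 := by positivity
  have key : ∀ f z Q : ℚ, z ≠ 0 → Q ≠ 0 → f * (z * z) / (Q * z) ^ 2 = f / Q ^ 2 := by
    intro f z Q hz hQ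
    field_simp
  push_cast
  rw [key _ _ _ hz1' hq1', key _ _ _ hz2' hq1']
end

section
/- Let R1 and R2 be finite rings that are Z-isoclinic via (α, β), and let s1 ∈ R1, s2 ∈ R2 with α(s1 + Z(R1)) = s2 + Z(R2). Then |[s1, R1]| = |[s2, R2]|, and for r ∈ [R1,R1], r ∈ [s1,R1] if and only if β(r) ∈ [s2,R2], where [s,R] := {[s,y] : y ∈ R}. -/
theorem stmt_19 (R₁ R₂ : Type*) [Ring R₁] [Fintype R₁] [Ring R₂] [Fintype R₂]
    (e : ZIsoclinism R₁ R₂) (s₁ : R₁) (s₂ : R₂)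
    (hs : e.α (QuotientAddGroup.mk s₁) = QuotientAddGroup.mk s₂) :
    Nat.card {w : R₁ | ∃ y : R₁, w = s₁ * y - y * s₁} =
      Nat.card {w : R₂ | ∃ y : R₂, w = s₂ * y - y * s₂} ∧
    ∀ r : commutatorAddSubgroup R₁,
      ((r : R₁) ∈ {w : R₁ | ∃ y : R₁, w = s₁ * y - y * s₁} ↔
        (e.β r : R₂) ∈ {w : R₂ | ∃ y : R₂, w = s₂ * y - y * s₂}) := by
  have key : ∀ r : commutatorAddSubgroup R₁,
      ((r : R₁) ∈ {w : R₁ | ∃ y : R₁, w = s₁ * y - y * s₁} ↔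
        (e.β r : R₂) ∈ {w : R₂ | ∃ y : R₂, w = s₂ * y - y * s₂}) := by
    intro r
    constructor
    · rintro ⟨y, hy⟩
      obtain ⟨y₂, hy₂⟩ := QuotientAddGroup.mk_surjective (e.α (QuotientAddGroup.mk y))
      have hc := e.compat s₁ y s₂ y₂ hs hy₂.symm
      have hr : r = ⟨s₁ * y - y * s₁, AddSubgroup.subset_closure ⟨s₁, y, rfl⟩⟩ :=
        Subtype.ext hy
      exact ⟨y₂, by rw [hr, hc]⟩
    · rintro ⟨y₂, hy₂⟩
      obtain ⟨q, hq⟩ := e.α.surjective (QuotientAddGroup.mk y₂)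
      obtain ⟨y₁, hy₁⟩ := QuotientAddGroup.mk_surjective q
      have hc := e.compat s₁ y₁ s₂ y₂ hs (by rw [hy₁, hq])
      have hr : (⟨s₁ * y₁ - y₁ * s₁, AddSubgroup.subset_closure ⟨s₁, y₁, rfl⟩⟩ :
          commutatorAddSubgroup R₁) = r :=
        e.β.injective (Subtype.ext (hc.trans hy₂.symm))
      exact ⟨y₁, by rw [← hr]⟩
  refine ⟨?_, key⟩
  have mem₁ : ∀ w : {w : R₁ | ∃ y : R₁, w = s₁ * y - y * s₁},
      (w : R₁) ∈ commutatorAddSubgroup R₁ := fun w =>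
    w.2.elim fun y hy => hy ▸ AddSubgroup.subset_closure ⟨s₁, y, rfl⟩
  have mem₂ : ∀ w : {w : R₂ | ∃ y : R₂, w = s₂ * y - y * s₂},
      (w : R₂) ∈ commutatorAddSubgroup R₂ := fun w =>
    w.2.elim fun y hy => hy ▸ AddSubgroup.subset_closure ⟨s₂, y, rfl⟩
  refine Nat.card_congr ⟨fun w => ⟨e.β ⟨w, mem₁ w⟩, (key ⟨w, mem₁ w⟩).mp w.2⟩,
    fun w => ⟨e.β.symm ⟨w, mem₂ w⟩, ?_⟩, ?_, ?_⟩
  · have : (e.β (e.β.symm ⟨(w : R₂), mem₂ w⟩) : R₂) ∈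
        {w : R₂ | ∃ y : R₂, w = s₂ * y - y * s₂} := by
      rw [e.β.apply_symm_apply]; exact w.2
    exact (key _).mpr this
  · intro w
    apply Subtype.ext
    show ((e.β.symm ⟨(e.β ⟨(w : R₁), mem₁ w⟩ : R₂), _⟩ : commutatorAddSubgroup R₁) : R₁)
      = (w : R₁)
    have : (⟨(e.β ⟨(w : R₁), mem₁ w⟩ : R₂), _⟩ : commutatorAddSubgroup R₂)
        = e.β ⟨(w : R₁), mem₁ w⟩ := rfl
    rw [this, e.β.symm_apply_apply]
  · intro w
    apply Subtype.ext
    show ((e.β ⟨(e.β.symm ⟨(w : R₂), mem₂ w⟩ : commutatorAddSubgroup R₁), _⟩ :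
      commutatorAddSubgroup R₂) : R₂) = (w : R₂)
    have : (⟨((e.β.symm ⟨(w : R₂), mem₂ w⟩ : commutatorAddSubgroup R₁) : R₁), _⟩ :
        commutatorAddSubgroup R₁) = e.β.symm ⟨(w : R₂), mem₂ w⟩ := rfl
    rw [this, e.β.apply_symm_apply]
end
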